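/- arXiv:2506.23413 — 2 statements merged into one kernel-verified Lean document; each statement's English description precedes it below -/
import Mathlib

section
/- Let C be a regular category with finite coproducts satisfying: binary coproducts of pullbacks are pullbacks; for each monomorphism m : S → A the square with top [1_S,1_S], left m+1_S, bottom [1_A,m], right m is a pullback; and for each regular epimorphism p the codiagonal square over p is a feeble pullback. Then for any monomorphism m : S → A and any equivalence relation (R, r₁, r₂) on S, the reflexive closure of the relation (R, m r₁, m r₂) on A is again an equivalence relation (i.e., transitive and symmetric). -/
open CategoryTheory Limits

/-- A commutative square (top `fst`, left `snd`, right `f`, bottom `g`) is a feeble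
pullback if the canonical comparison morphism into the pullback is a regular
epimorphism. -/
def IsFeeblePullback {C : Type*} [CategoryTheory.Category C] {P X Y Z : C}
    (fst : P ⟶ X) (snd : P ⟶ Y) (f : X ⟶ Z) (g : Y ⟶ Z)
    [CategoryTheory.Limits.HasPullback f g] : Prop :=
  ∃ w : fst ≫ f = snd ≫ g,
    Nonempty (CategoryTheory.RegularEpi (CategoryTheory.Limits.pullback.lift fst snd w))

/-- Regular epimorphisms are stable under pullback. -/
def RegularEpisPullbackStable (C : Type*) [CategoryTheory.Category C]
    [CategoryTheory.Limits.HasPullbacks C] : Prop :=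
  ∀ {X Y Z : C} (f : X ⟶ Z) (g : Y ⟶ Z), CategoryTheory.RegularEpi g →
    Nonempty (CategoryTheory.RegularEpi (CategoryTheory.Limits.pullback.fst f g))

/-- Kernel pairs admit coequalizers. -/
def HasKernelPairCoequalizers (C : Type*) [CategoryTheory.Category C]
    [CategoryTheory.Limits.HasPullbacks C] : Prop :=
  ∀ {X Y : C} (f : X ⟶ Y),
    CategoryTheory.Limits.HasCoequalizer (CategoryTheory.Limits.pullback.fst f f)
      (CategoryTheory.Limits.pullback.snd f f)

/-- Binary coproducts of pullback squares are pullback squares (Condition (b)). -/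
def CoprodOfPullbacksIsPullback (C : Type*) [CategoryTheory.Category C]
    [CategoryTheory.Limits.HasBinaryCoproducts C] : Prop :=
  ∀ {P X Y Z P' X' Y' Z' : C}
    (fst : P ⟶ X) (snd : P ⟶ Y) (f : X ⟶ Z) (g : Y ⟶ Z)
    (fst' : P' ⟶ X') (snd' : P' ⟶ Y') (f' : X' ⟶ Z') (g' : Y' ⟶ Z'),
    CategoryTheory.IsPullback fst snd f g → CategoryTheory.IsPullback fst' snd' f' g' →
      CategoryTheory.IsPullback (CategoryTheory.Limits.coprod.map fst fst')
        (CategoryTheory.Limits.coprod.map snd snd')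
        (CategoryTheory.Limits.coprod.map f f') (CategoryTheory.Limits.coprod.map g g')

/-- Condition (c): for each monomorphism `m : S ⟶ A`, the square with top
`[1,1] : S+S ⟶ S`, left `m+1`, right `m` and bottom `[1,m] : A+S ⟶ A` is a pullback. -/
def MonoSquaresArePullbacks (C : Type*) [CategoryTheory.Category C]
    [CategoryTheory.Limits.HasBinaryCoproducts C] : Prop :=
  ∀ {S A : C} (m : S ⟶ A), CategoryTheory.Mono m →
    CategoryTheory.IsPullback (CategoryTheory.Limits.coprod.desc (𝟙 S) (𝟙 S))
      (CategoryTheory.Limits.coprod.map m (𝟙 S)) m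
      (CategoryTheory.Limits.coprod.desc (𝟙 A) m)

/-- Condition (d): for each regular epimorphism `p : E ⟶ B`, the codiagonal square over
`p` is a feeble pullback. -/
def RegEpiSquaresAreFeeblePullbacks (C : Type*) [CategoryTheory.Category C]
    [CategoryTheory.Limits.HasPullbacks C]
    [CategoryTheory.Limits.HasBinaryCoproducts C] : Prop :=
  ∀ {E B : C} (p : E ⟶ B), CategoryTheory.RegularEpi p →
    IsFeeblePullback (CategoryTheory.Limits.coprod.desc (𝟙 E) (𝟙 E))
      (CategoryTheory.Limits.coprod.map p p) p
      (CategoryTheory.Limits.coprod.desc (𝟙 B) (𝟙 B))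

/-! The reflexive closure `Rbar` is the image of `e : R ⨿ A ⟶ Rbar`, so its symmetry and
transitivity are obtained by lifting against the mono `mb` along strong epimorphisms. Symmetry
of `R` gives an endomorphism of `R ⨿ A` over the swap. For transitivity, the composable pairs of
`R ⨿ A`, i.e. the pullback of `[r₂ m, 1]` and `[r₁ m, 1]`, are covered by a strong epimorphism
from `(R ×_S R ⨿ R) ⨿ (R ⨿ A)`, on which composition is given by transitivity of `R` on the
first summand and by a projection on the others. In an extensive category that pullback would
be this coproduct; here conditions (b) and (d) show that a pullback of a regular epimorphism
along `[g₁, g₂]` is covered by the coproduct of the pullbacks along `g₁` and `g₂`, and (c)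
computes the pullback of `[r₂ m, 1]` along `m` as `R ⨿ S`. -/

attribute [local simp] pullback.lift_fst pullback.lift_snd pullback.lift_fst_assoc
  pullback.lift_snd_assoc coprod.inl_desc coprod.inr_desc coprod.inl_desc_assoc
  coprod.inr_desc_assoc prod.lift_fst prod.lift_snd prod.lift_fst_assoc prod.lift_snd_assoc

section

variable {C : Type*} [Category C]

theorem RegularEpisPullbackStable.isStableUnderBaseChange [HasPullbacks C]
    (h : RegularEpisPullbackStable C) : (MorphismProperty.regularEpi C).IsStableUnderBaseChange :=
  .mk' fun _ _ _ f g _ hg => ⟨h f g hg.regularEpi.some⟩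

instance strongEpi_coprod_map [HasBinaryCoproducts C] {X₁ Y₁ X₂ Y₂ : C}
    (f₁ : X₁ ⟶ Y₁) (f₂ : X₂ ⟶ Y₂) [StrongEpi f₁] [StrongEpi f₂] :
    StrongEpi (coprod.map f₁ f₂) :=
  StrongEpi.mk' fun _ _ z _ u v sq => by
    have sq₁ : CommSq (coprod.inl ≫ u) f₁ z (coprod.inl ≫ v) :=
      ⟨by rw [Category.assoc, sq.w, coprod.inl_map_assoc]⟩
    have sq₂ : CommSq (coprod.inr ≫ u) f₂ z (coprod.inr ≫ v) :=
      ⟨by rw [Category.assoc, sq.w, coprod.inr_map_assoc]⟩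
    exact ⟨⟨⟨coprod.desc sq₁.lift sq₂.lift, by ext <;> simp, by ext <;> simp⟩⟩⟩

section BaseChange

variable [HasPullbacks C] [(MorphismProperty.regularEpi C).IsStableUnderBaseChange]

instance strongEpi_pullback_map {X Y Z X' Y' : C} (f : X ⟶ Z) (g : Y ⟶ Z)
    (p : X' ⟶ X) (q : Y' ⟶ Y) [IsRegularEpi p] [IsRegularEpi q] :
    StrongEpi (pullback.map (p ≫ f) (q ≫ g) f g p q (𝟙 Z) (by simp) (by simp)) := by
  let φ := pullback.map (p ≫ f) (q ≫ g) f (q ≫ g) p (𝟙 Y') (𝟙 Z) (by simp) (by simp)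
  let ψ := pullback.map f (q ≫ g) f g (𝟙 X) q (𝟙 Z) (by simp) (by simp)
  have hφ : IsPullback (pullback.fst (p ≫ f) (q ≫ g)) φ p (pullback.fst f (q ≫ g)) :=
    (IsPullback.of_right (by simpa [φ] using (IsPullback.of_hasPullback (p ≫ f) (q ≫ g)).flip)
      (by simp [φ]) (IsPullback.of_hasPullback f (q ≫ g)).flip).flip
  have hψ : IsPullback (pullback.snd f (q ≫ g)) ψ q (pullback.snd f g) :=
    (IsPullback.of_right (by simpa [ψ] using IsPullback.of_hasPullback f (q ≫ g))
      (by simp [ψ]) (IsPullback.of_hasPullback f g)).flip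
  have : IsRegularEpi φ :=
    MorphismProperty.of_isPullback (P := .regularEpi C) hφ ‹IsRegularEpi p›
  have : IsRegularEpi ψ :=
    MorphismProperty.of_isPullback (P := .regularEpi C) hψ ‹IsRegularEpi q›
  have : φ ≫ ψ = pullback.map (p ≫ f) (q ≫ g) f g p q (𝟙 Z) (by simp) (by simp) := by
    ext <;> simp [φ, ψ]
  rw [← this]
  infer_instance

end BaseChange

namespace IsFeeblePullback

variable [HasPullbacks C]

theorem isRegularEpi_lift {P X Y Z : C} {fst : P ⟶ X} {snd : P ⟶ Y} {f : X ⟶ Z} {g : Y ⟶ Z}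
    (h : IsFeeblePullback fst snd f g) (w : fst ≫ f = snd ≫ g) :
    IsRegularEpi (pullback.lift fst snd w) :=
  ⟨h.2⟩

theorem flip {P X Y Z : C} {fst : P ⟶ X} {snd : P ⟶ Y} {f : X ⟶ Z} {g : Y ⟶ Z}
    (h : IsFeeblePullback fst snd f g) : IsFeeblePullback snd fst g f := by
  obtain ⟨w, hw⟩ := h
  have : pullback.lift snd fst w.symm = pullback.lift fst snd w ≫ (pullbackSymmetry f g).hom := by
    ext <;> simp
  have h := (MorphismProperty.regularEpi C).cancel_right_of_respectsIso _
    (pullbackSymmetry f g).hom |>.2 ⟨hw⟩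
  rw [← this] at h
  exact ⟨w.symm, h.regularEpi⟩

theorem paste_horiz {X₁₁ X₁₂ X₁₃ X₂₁ X₂₂ X₂₃ : C} {h₁₁ : X₁₁ ⟶ X₁₂} {h₁₂ : X₁₂ ⟶ X₁₃}
    {h₂₁ : X₂₁ ⟶ X₂₂} {h₂₂ : X₂₂ ⟶ X₂₃} {v₁₁ : X₁₁ ⟶ X₂₁} {v₁₂ : X₁₂ ⟶ X₂₂}
    {v₁₃ : X₁₃ ⟶ X₂₃} (s : IsFeeblePullback h₁₁ v₁₁ v₁₂ h₂₁) (t : IsPullback h₁₂ v₁₂ v₁₃ h₂₂) :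
    IsFeeblePullback (h₁₁ ≫ h₁₂) v₁₁ v₁₃ (h₂₁ ≫ h₂₂) := by
  obtain ⟨w, hw⟩ := s
  have st := (IsPullback.of_hasPullback v₁₂ h₂₁).paste_horiz t
  have w' : (h₁₁ ≫ h₁₂) ≫ v₁₃ = v₁₁ ≫ h₂₁ ≫ h₂₂ := by
    rw [Category.assoc, t.w, reassoc_of% w]
  have : pullback.lift _ _ w' = pullback.lift h₁₁ v₁₁ w ≫ st.isoPullback.hom := by
    ext <;> simp
  have h := (MorphismProperty.regularEpi C).cancel_right_of_respectsIso
    (pullback.lift h₁₁ v₁₁ w) st.isoPullback.hom |>.2 ⟨hw⟩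
  rw [← this] at h
  exact ⟨w', h.regularEpi⟩

end IsFeeblePullback

section MonoSquares

variable [HasBinaryCoproducts C]

theorem MonoSquaresArePullbacks.isPullback_map_id {S A : C} (hc : MonoSquaresArePullbacks C)
    (m : S ⟶ A) [Mono m] :
    IsPullback (coprod.map (𝟙 S) m) (coprod.desc (𝟙 S) (𝟙 S)) (coprod.desc m (𝟙 A)) m :=
  (hc m inferInstance).flip.of_iso (coprod.braiding S S) (coprod.braiding A S) (Iso.refl S)
    (Iso.refl A) (by ext <;> simp) (by ext <;> simp) (by ext <;> simp) (by simp)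

theorem isPullback_coprod_desc_comp_mono (hb : CoprodOfPullbacksIsPullback C)
    (hc : MonoSquaresArePullbacks C) {X S A : C} (f : X ⟶ S) (m : S ⟶ A) [Mono m] :
    IsPullback (coprod.map (𝟙 X) m) (coprod.desc f (𝟙 S)) (coprod.desc (f ≫ m) (𝟙 A)) m := by
  have h := hb (𝟙 X) f f (𝟙 S) m (𝟙 S) (𝟙 A) m (.of_horiz_isIso ⟨by simp⟩)
    (.of_vert_isIso ⟨by simp⟩)
  simpa using h.paste_vert (hc.isPullback_map_id m)

end MonoSquares

section Conditions

variable [HasPullbacks C] [HasBinaryCoproducts C]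
  [(MorphismProperty.regularEpi C).IsStableUnderBaseChange]
  (hb : CoprodOfPullbacksIsPullback C) (hc : MonoSquaresArePullbacks C)
  (hd : RegEpiSquaresAreFeeblePullbacks C)
include hb hd

theorem isFeeblePullback_coprod_desc {E B Y₁ Y₂ P₁ P₂ : C} {p : E ⟶ B} [IsRegularEpi p]
    {g₁ : Y₁ ⟶ B} {g₂ : Y₂ ⟶ B}
    {a₁ : P₁ ⟶ E} {b₁ : P₁ ⟶ Y₁} {a₂ : P₂ ⟶ E} {b₂ : P₂ ⟶ Y₂}
    (h₁ : IsPullback a₁ b₁ p g₁) (h₂ : IsPullback a₂ b₂ p g₂) :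
    IsFeeblePullback (coprod.desc a₁ a₂) (coprod.map b₁ b₂) p (coprod.desc g₁ g₂) := by
  obtain ⟨wc, hcov⟩ := hd p (IsRegularEpi.getStruct p)
  set c := pullback.lift _ _ wc
  have hc₁ : c ≫ pullback.fst _ _ = coprod.desc (𝟙 E) (𝟙 E) := pullback.lift_fst _ _ _
  have hc₂ : c ≫ pullback.snd _ _ = coprod.map p p := pullback.lift_snd _ _ _
  have hQ := IsPullback.of_hasPullback (pullback.snd p (coprod.desc (𝟙 B) (𝟙 B)))
    (coprod.map g₁ g₂)
  let φ : P₁ ⨿ P₂ ⟶ pullback (pullback.snd _ _) (coprod.map g₁ g₂) :=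
    pullback.lift (coprod.map a₁ a₂ ≫ c) (coprod.map b₁ b₂) (by
      rw [Category.assoc, hc₂]; ext <;> simp [h₁.w, h₂.w])
  -- By condition (b), `P₁ ⨿ P₂` is the pullback of `p ⨿ p = c ≫ snd`, hence a base change of `c`.
  have hφ : IsPullback φ (coprod.map a₁ a₂)
      (pullback.fst (pullback.snd p (coprod.desc (𝟙 B) (𝟙 B))) (coprod.map g₁ g₂)) c :=
    IsPullback.of_right (by simpa [φ, hc₂] using (hb _ _ _ _ _ _ _ _ h₁ h₂).flip) (by simp [φ])
      hQ.flip
  have : IsRegularEpi φ := MorphismProperty.of_isPullback (P := .regularEpi C) hφ.flip ⟨hcov⟩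
  have hQ' : IsPullback (pullback.fst _ _ ≫ pullback.fst _ _)
      (pullback.snd (pullback.snd p (coprod.desc (𝟙 B) (𝟙 B))) (coprod.map g₁ g₂)) p
      (coprod.desc g₁ g₂) := by
    simpa using (hQ.flip.paste_vert (IsPullback.of_hasPullback p _).flip).flip
  have w : coprod.desc a₁ a₂ ≫ p = coprod.map b₁ b₂ ≫ coprod.desc g₁ g₂ := by
    ext <;> simp [h₁.w, h₂.w]
  have hlift : pullback.lift _ _ w = φ ≫ hQ'.isoPullback.hom := by
    ext <;> simp [φ, hc₁]
  have h := (MorphismProperty.regularEpi C).cancel_right_of_respectsIso φ hQ'.isoPullback.hom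
    |>.2 this
  rw [← hlift] at h
  exact ⟨w, h.regularEpi⟩

include hc

theorem isFeeblePullback_coprod_desc_comp_mono {X Y S A : C} (f : X ⟶ S) (q : Y ⟶ S)
    [IsRegularEpi q] (m : S ⟶ A) [Mono m] :
    IsFeeblePullback (coprod.map (pullback.fst f q) (q ≫ m))
      (coprod.desc (pullback.snd f q) (𝟙 Y)) (coprod.desc (f ≫ m) (𝟙 A)) (q ≫ m) := by
  have h := (isFeeblePullback_coprod_desc hb hd (IsPullback.of_hasPullback f q).flip
    (.of_horiz_isIso ⟨by simp⟩ : IsPullback (𝟙 Y) q q (𝟙 S))).flip.paste_horiz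
      (isPullback_coprod_desc_comp_mono hb hc f m)
  simpa [coprod.map_map] using h

theorem exists_strongEpi_pullback_coprod_desc_comp_mono {X Y S A : C} (f : X ⟶ S) (q : Y ⟶ S)
    [IsRegularEpi q] (m : S ⟶ A) [Mono m] :
    ∃ π : (pullback f q ⨿ Y) ⨿ (X ⨿ A) ⟶
        pullback (coprod.desc (f ≫ m) (𝟙 A)) (coprod.desc (q ≫ m) (𝟙 A)),
      StrongEpi π ∧
      π ≫ pullback.fst _ _ = coprod.desc (coprod.map (pullback.fst f q) (q ≫ m)) (𝟙 _) ∧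
      π ≫ pullback.snd _ _ =
        coprod.map (coprod.desc (pullback.snd f q) (𝟙 Y)) (coprod.desc (f ≫ m) (𝟙 A)) := by
  have : IsSplitEpi (coprod.desc (f ≫ m) (𝟙 A)) := .mk' ⟨coprod.inr, by simp⟩
  have hν := isFeeblePullback_coprod_desc_comp_mono hb hc hd f q m
  have hμ := isFeeblePullback_coprod_desc hb hd (.of_hasPullback _ (q ≫ m))
    (.of_horiz_isIso ⟨by simp⟩ :
      IsPullback (𝟙 _) (coprod.desc (f ≫ m) (𝟙 A)) (coprod.desc (f ≫ m) (𝟙 A)) (𝟙 A))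
  have := hν.isRegularEpi_lift hν.1
  have := hμ.isRegularEpi_lift hμ.1
  refine ⟨coprod.map (pullback.lift _ _ hν.1) (𝟙 _) ≫ pullback.lift _ _ hμ.1,
    inferInstance, ?_, ?_⟩ <;> ext <;> simp

end Conditions

theorem exists_symm_of_strongEpi [HasBinaryProducts C] {E R A : C} (e : E ⟶ R) [StrongEpi e]
    (mb : R ⟶ A ⨯ A) [Mono mb] (σ : E ⟶ E)
    (h₁ : σ ≫ e ≫ mb ≫ prod.fst = e ≫ mb ≫ prod.snd)
    (h₂ : σ ≫ e ≫ mb ≫ prod.snd = e ≫ mb ≫ prod.fst) :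
    ∃ s : R ⟶ R, s ≫ mb ≫ prod.fst = mb ≫ prod.snd ∧ s ≫ mb ≫ prod.snd = mb ≫ prod.fst := by
  have sq : CommSq (σ ≫ e) e mb (mb ≫ prod.lift prod.snd prod.fst) := ⟨by ext <;> simp [h₁, h₂]⟩
  exact ⟨sq.lift, by simp, by simp⟩

theorem exists_trans_of_strongEpi_cover [HasPullbacks C] [HasBinaryProducts C]
    [(MorphismProperty.regularEpi C).IsStableUnderBaseChange] {E R A X : C} {e : E ⟶ R}
    [IsRegularEpi e] {mb : R ⟶ A ⨯ A} [Mono mb] {h₁ h₂ : E ⟶ A}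
    (he₁ : e ≫ mb ≫ prod.fst = h₁) (he₂ : e ≫ mb ≫ prod.snd = h₂)
    (π : X ⟶ pullback h₂ h₁) [StrongEpi π] (τ : X ⟶ E)
    (hτ₁ : τ ≫ h₁ = π ≫ pullback.fst _ _ ≫ h₁) (hτ₂ : τ ≫ h₂ = π ≫ pullback.snd _ _ ≫ h₂) :
    ∃ t : pullback (mb ≫ prod.snd) (mb ≫ prod.fst) ⟶ R,
      t ≫ mb ≫ prod.fst = pullback.fst (mb ≫ prod.snd) (mb ≫ prod.fst) ≫ mb ≫ prod.fst ∧
      t ≫ mb ≫ prod.snd = pullback.snd (mb ≫ prod.snd) (mb ≫ prod.fst) ≫ mb ≫ prod.snd := by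
  subst he₁ he₂
  have sq : CommSq (τ ≫ e) (π ≫ pullback.map (e ≫ mb ≫ prod.snd) (e ≫ mb ≫ prod.fst)
      (mb ≫ prod.snd) (mb ≫ prod.fst) e e (𝟙 A) (by simp) (by simp)) mb
      (prod.lift (pullback.fst _ _ ≫ mb ≫ prod.fst) (pullback.snd _ _ ≫ mb ≫ prod.snd)) :=
    ⟨by ext <;> simp [hτ₁, hτ₂]⟩
  exact ⟨sq.lift, by simp, by simp⟩

end

theorem reflexive_closure_is_equivalence_relation_general {C : Type*} [Category C]
    [HasFiniteLimits C]
    (hstab : RegularEpisPullbackStable C) [HasFiniteCoproducts C]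
    (hb : CoprodOfPullbacksIsPullback C) (hc : MonoSquaresArePullbacks C)
    (hd : RegEpiSquaresAreFeeblePullbacks C)
    {S A R : C} (m : S ⟶ A) [Mono m] (r₁ r₂ : R ⟶ S)
    (hrefl : ∃ d : S ⟶ R, d ≫ r₁ = 𝟙 S ∧ d ≫ r₂ = 𝟙 S)
    (hsymm : ∃ s : R ⟶ R, s ≫ r₁ = r₂ ∧ s ≫ r₂ = r₁)
    (htrans : ∃ t : pullback r₂ r₁ ⟶ R,
      t ≫ r₁ = pullback.fst r₂ r₁ ≫ r₁ ∧ t ≫ r₂ = pullback.snd r₂ r₁ ≫ r₂)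
    {Rbar : C} (e : R ⨿ A ⟶ Rbar) (mb : Rbar ⟶ A ⨯ A)
    (he : RegularEpi e) (hmb : Mono mb)
    (hfact : e ≫ mb =
      coprod.desc (prod.lift (r₁ ≫ m) (r₂ ≫ m)) (prod.lift (𝟙 A) (𝟙 A))) :
    (∃ d : A ⟶ Rbar, d ≫ mb ≫ prod.fst = 𝟙 A ∧ d ≫ mb ≫ prod.snd = 𝟙 A) ∧
    (∃ s : Rbar ⟶ Rbar, s ≫ mb ≫ prod.fst = mb ≫ prod.snd ∧
      s ≫ mb ≫ prod.snd = mb ≫ prod.fst) ∧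
    (∃ t : pullback (mb ≫ prod.snd) (mb ≫ prod.fst) ⟶ Rbar,
      t ≫ mb ≫ prod.fst =
        pullback.fst (mb ≫ prod.snd) (mb ≫ prod.fst) ≫ mb ≫ prod.fst ∧
      t ≫ mb ≫ prod.snd =
        pullback.snd (mb ≫ prod.snd) (mb ≫ prod.fst) ≫ mb ≫ prod.snd) := by
  have := hstab.isStableUnderBaseChange
  have := isRegularEpi_of_regularEpi he
  obtain ⟨d, hd₁, -⟩ := hrefl
  obtain ⟨s, hs₁, hs₂⟩ := hsymm
  obtain ⟨t, ht₁, ht₂⟩ := htrans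
  have : IsSplitEpi r₁ := .mk' ⟨d, hd₁⟩
  have h₁ : e ≫ mb ≫ prod.fst = coprod.desc (r₁ ≫ m) (𝟙 A) := by
    rw [reassoc_of% hfact]; ext <;> simp
  have h₂ : e ≫ mb ≫ prod.snd = coprod.desc (r₂ ≫ m) (𝟙 A) := by
    rw [reassoc_of% hfact]; ext <;> simp
  refine ⟨⟨coprod.inr ≫ e, by simp [h₁], by simp [h₂]⟩, ?_, ?_⟩
  · exact exists_symm_of_strongEpi e mb (coprod.map s (𝟙 A))
      (by rw [h₁, h₂]; ext <;> simp [reassoc_of% hs₁])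
      (by rw [h₁, h₂]; ext <;> simp [reassoc_of% hs₂])
  · obtain ⟨π, _, hπ₁, hπ₂⟩ := exists_strongEpi_pullback_coprod_desc_comp_mono hb hc hd r₂ r₁ m
    refine exists_trans_of_strongEpi_cover h₁ h₂ π
      (coprod.desc (coprod.desc (t ≫ coprod.inl) coprod.inl) (𝟙 _)) ?_ ?_
    · rw [reassoc_of% hπ₁]; ext <;> simp [reassoc_of% ht₁]
    · rw [reassoc_of% hπ₂]; ext <;> simp [reassoc_of% ht₂]

/-- Let `C` be a regular category with finite coproducts satisfying Conditions (b), (c)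
and (d). For any monomorphism `m : S ⟶ A` and any equivalence relation `(R, r₁, r₂)` on
`S`, the reflexive closure of the relation `(R, r₁ ≫ m, r₂ ≫ m)` on `A` — obtained from
any (regular epi, mono)-factorization of `[⟨r₁≫m, r₂≫m⟩, ⟨1,1⟩] : R+A ⟶ A×A` — is again
an equivalence relation (reflexive, symmetric and transitive). -/
theorem reflexive_closure_is_equivalence_relation {C : Type*} [Category C]
    [HasFiniteLimits C] (hcoeq : HasKernelPairCoequalizers C)
    (hstab : RegularEpisPullbackStable C) [HasFiniteCoproducts C]
    (hb : CoprodOfPullbacksIsPullback C) (hc : MonoSquaresArePullbacks C)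
    (hd : RegEpiSquaresAreFeeblePullbacks C)
    {S A R : C} (m : S ⟶ A) [Mono m] (r₁ r₂ : R ⟶ S)
    (hmono : Mono (prod.lift r₁ r₂))
    (hrefl : ∃ d : S ⟶ R, d ≫ r₁ = 𝟙 S ∧ d ≫ r₂ = 𝟙 S)
    (hsymm : ∃ s : R ⟶ R, s ≫ r₁ = r₂ ∧ s ≫ r₂ = r₁)
    (htrans : ∃ t : pullback r₂ r₁ ⟶ R,
      t ≫ r₁ = pullback.fst r₂ r₁ ≫ r₁ ∧ t ≫ r₂ = pullback.snd r₂ r₁ ≫ r₂)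
    {Rbar : C} (e : R ⨿ A ⟶ Rbar) (mb : Rbar ⟶ A ⨯ A)
    (he : RegularEpi e) (hmb : Mono mb)
    (hfact : e ≫ mb =
      coprod.desc (prod.lift (r₁ ≫ m) (r₂ ≫ m)) (prod.lift (𝟙 A) (𝟙 A))) :
    (∃ d : A ⟶ Rbar, d ≫ mb ≫ prod.fst = 𝟙 A ∧ d ≫ mb ≫ prod.snd = 𝟙 A) ∧
    (∃ s : Rbar ⟶ Rbar, s ≫ mb ≫ prod.fst = mb ≫ prod.snd ∧
      s ≫ mb ≫ prod.snd = mb ≫ prod.fst) ∧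
    (∃ t : pullback (mb ≫ prod.snd) (mb ≫ prod.fst) ⟶ Rbar,
      t ≫ mb ≫ prod.fst =
        pullback.fst (mb ≫ prod.snd) (mb ≫ prod.fst) ≫ mb ≫ prod.fst ∧
      t ≫ mb ≫ prod.snd =
        pullback.snd (mb ≫ prod.snd) (mb ≫ prod.fst) ≫ mb ≫ prod.snd) :=
  reflexive_closure_is_equivalence_relation_general hstab hb hc hd m r₁ r₂ hrefl hsymm htrans e mb
    he hmb hfact
end

section
/- Let C be an exact category satisfying Condition (*). Then every monomorphism in C is a regular monomorphism, and consequently C is balanced (every morphism that is both a monomorphism and an epimorphism is an isomorphism). -/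
open CategoryTheory Limits

/-- Every internal equivalence relation is effective (a kernel pair): Barr-exactness. -/
def EquivRelsEffective (C : Type*) [CategoryTheory.Category C]
    [CategoryTheory.Limits.HasFiniteLimits C] : Prop :=
  ∀ {R S : C} (r₁ r₂ : R ⟶ S),
    CategoryTheory.Mono (CategoryTheory.Limits.prod.lift r₁ r₂) →
    (∃ d : S ⟶ R, d ≫ r₁ = 𝟙 S ∧ d ≫ r₂ = 𝟙 S) →
    (∃ s : R ⟶ R, s ≫ r₁ = r₂ ∧ s ≫ r₂ = r₁) →
    (∃ t : CategoryTheory.Limits.pullback r₂ r₁ ⟶ R,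
      t ≫ r₁ = CategoryTheory.Limits.pullback.fst r₂ r₁ ≫ r₁ ∧
      t ≫ r₂ = CategoryTheory.Limits.pullback.snd r₂ r₁ ≫ r₂) →
    ∃ (Q : C) (q : S ⟶ Q), CategoryTheory.IsKernelPair q r₁ r₂


/-!
A monomorphism `m : S ⟶ A` is the equalizer of the two coprojections of the pushout
`A ⊔_S A`, provided the pushout square is a pullback. The pushout is constructed as the
quotient of `A ⨿ A` by an equivalence relation, namely the image of a span out of
`(A ⨿ S) ⨿ (A ⨿ S)` that relates `inl (m s)` with `inr (m s)`. Reflexivity and symmetry are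
witnessed on the span. For transitivity, Condition (c) computes the pullback of `[1, m]` along
`m`, Condition (b) carries this to coproducts, and Condition (d) shows that the coproduct of
these pullbacks covers the pullback of the relation with itself. Exactness then gives a
quotient `p : A ⨿ A ⟶ Q` whose kernel pair is the relation. By (b) and (c) again, the fibre of
the first projection of the relation over `inl` is `A ⨿ S`; pasting this with the kernel pair
square gives the pullback square `m, m, inl ≫ p, inr ≫ p`. Balancedness follows because
regular monomorphisms are strong.
-/

-- These are not simp lemmas in Mathlib.
attribute [local simp] prod.lift_fst prod.lift_snd pullback.lift_fst pullback.lift_snd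
  pullback.lift_fst_assoc pullback.lift_snd_assoc coprod.inl_desc coprod.inr_desc

section

variable {C : Type*} [Category C]

theorem regular_of_hasKernelPairCoequalizers [HasFiniteLimits C]
    (hcoeq : HasKernelPairCoequalizers C) (hstab : RegularEpisPullbackStable C) : Regular C where
  hasCoequalizer_of_isKernelPair {_ _ _ f g₁ g₂} h :=
    haveI := hcoeq f
    hasColimit_of_iso (parallelPairIso g₁ g₂ (pullback.fst f f) (pullback.snd f f) h.isoPullback
      (Iso.refl _) (by simp) (by simp))
  regularEpiIsStableUnderBaseChange :=
    .mk' fun _ _ _ f g _ ⟨hg⟩ => ⟨hstab f g hg.some⟩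

noncomputable def regularMonoOfIsPullback {S A Q : C} {m : S ⟶ A} {f g : A ⟶ Q}
    (h : IsPullback m m f g) : RegularMono m where
  Z := Q
  left := f
  right := g
  w := h.w
  isLimit := Fork.IsLimit.mk _ (fun s => h.lift s.ι s.ι s.condition) (fun s => h.lift_fst _ _ _)
    (fun s u hu => h.hom_ext (by simpa using hu) (by simpa using hu))

theorem hom_ext_of_mono_prodLift {T I B : C} [HasBinaryProduct B B] {ρ₁ ρ₂ : I ⟶ B}
    [Mono (prod.lift ρ₁ ρ₂)] {u v : T ⟶ I} (h₁ : u ≫ ρ₁ = v ≫ ρ₁) (h₂ : u ≫ ρ₂ = v ≫ ρ₂) :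
    u = v := by
  rw [← cancel_mono (prod.lift ρ₁ ρ₂)]
  ext <;> simpa

theorem exists_lift_of_strongEpi_of_mono_prodLift {Z W I B : C} [HasBinaryProduct B B]
    (c : Z ⟶ W) [StrongEpi c] {ρ₁ ρ₂ : I ⟶ B} [Mono (prod.lift ρ₁ ρ₂)] (t : Z ⟶ I)
    (u₁ u₂ : W ⟶ B) (h₁ : t ≫ ρ₁ = c ≫ u₁) (h₂ : t ≫ ρ₂ = c ≫ u₂) :
    ∃ l : W ⟶ I, l ≫ ρ₁ = u₁ ∧ l ≫ ρ₂ = u₂ := by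
  have sq : CommSq t c (prod.lift ρ₁ ρ₂) (prod.lift u₁ u₂) := ⟨by ext <;> simp [h₁, h₂]⟩
  exact ⟨sq.lift, by simpa using sq.fac_right =≫ prod.fst, by simpa using sq.fac_right =≫ prod.snd⟩

theorem exists_symm_of_swap {X I B : C} [HasBinaryProduct B B] {r₁ r₂ : X ⟶ B}
    (e : X ⟶ I) [StrongEpi e] {ρ₁ ρ₂ : I ⟶ B} [Mono (prod.lift ρ₁ ρ₂)]
    (he₁ : e ≫ ρ₁ = r₁) (he₂ : e ≫ ρ₂ = r₂) (σ : X ⟶ X) (hσ₁ : σ ≫ r₁ = r₂)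
    (hσ₂ : σ ≫ r₂ = r₁) : ∃ s : I ⟶ I, s ≫ ρ₁ = ρ₂ ∧ s ≫ ρ₂ = ρ₁ :=
  exists_lift_of_strongEpi_of_mono_prodLift e (σ ≫ e) ρ₂ ρ₁ (by simp [he₁, he₂, hσ₁])
    (by simp [he₁, he₂, hσ₂])

theorem isPullback_of_strongEpi_fac {P X Y Z W : C} {fst : P ⟶ X} {snd : P ⟶ Y} {f : X ⟶ Z}
    {g : Y ⟶ Z} [HasPullback f g] (w : fst ≫ f = snd ≫ g) [Mono (pullback.lift fst snd w)]
    (c : W ⟶ pullback f g) [StrongEpi c] (π : W ⟶ P) (hπ : π ≫ pullback.lift fst snd w = c) :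
    IsPullback fst snd f g := by
  subst hπ
  have := strongEpi_of_strongEpi π (pullback.lift fst snd w)
  have := isIso_of_mono_of_strongEpi (pullback.lift fst snd w)
  exact IsPullback.of_iso_pullback ⟨w⟩ (asIso (pullback.lift fst snd w)) (by simp) (by simp)

section Regular

variable [Regular C]

theorem strongEpi_lift_of_isPullback_right {P X Y Y' Z : C} {fst : P ⟶ X} {snd : P ⟶ Y}
    {f : X ⟶ Z} {e : Y ⟶ Y'} {g : Y' ⟶ Z} (h : IsPullback fst snd f (e ≫ g)) [IsRegularEpi e]
    [HasPullback f g] :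
    StrongEpi (pullback.lift fst (snd ≫ e) (by simpa using h.w) : P ⟶ pullback f g) := by
  have hpb : IsPullback (pullback.lift fst (snd ≫ e) (by simpa using h.w)) snd
      (pullback.snd f g) e :=
    .of_right (by simpa using h) (by simp) (.of_hasPullback f g)
  have : IsRegularEpi (pullback.lift fst (snd ≫ e) (by simpa using h.w) : P ⟶ pullback f g) :=
    Regular.regularEpiIsStableUnderBaseChange.of_isPullback hpb.flip ‹_›
  infer_instance

theorem strongEpi_lift_of_isPullback_left {P X X' Y Z : C} {fst : P ⟶ X} {snd : P ⟶ Y}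
    {e : X ⟶ X'} {f : X' ⟶ Z} {g : Y ⟶ Z} (h : IsPullback fst snd (e ≫ f) g) [IsRegularEpi e]
    [HasPullback f g] :
    StrongEpi (pullback.lift (fst ≫ e) snd (by simpa using h.w) : P ⟶ pullback f g) := by
  have := strongEpi_lift_of_isPullback_right h.flip
  rw [show pullback.lift (fst ≫ e) snd (by simpa using h.w) =
      pullback.lift snd (fst ≫ e) (by simpa using h.w.symm) ≫ (pullbackSymmetry g f).hom by
    ext <;> simp]
  exact strongEpi_comp _ _

theorem exists_trans_of_cover {X I B Z : C} {r₁ r₂ : X ⟶ B} (e : X ⟶ I)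
    [IsRegularEpi e] {ρ₁ ρ₂ : I ⟶ B} [Mono (prod.lift ρ₁ ρ₂)]
    (he₁ : e ≫ ρ₁ = r₁) (he₂ : e ≫ ρ₂ = r₂) (c : Z ⟶ pullback r₂ r₁) [StrongEpi c] (t : Z ⟶ X)
    (ht₁ : t ≫ r₁ = c ≫ pullback.fst r₂ r₁ ≫ r₁) (ht₂ : t ≫ r₂ = c ≫ pullback.snd r₂ r₁ ≫ r₂) :
    ∃ t : pullback ρ₂ ρ₁ ⟶ I,
      t ≫ ρ₁ = pullback.fst ρ₂ ρ₁ ≫ ρ₁ ∧ t ≫ ρ₂ = pullback.snd ρ₂ ρ₁ ≫ ρ₂ := by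
  subst he₁ he₂
  have := strongEpi_lift_of_isPullback_left (.of_hasPullback (e ≫ ρ₂) (e ≫ ρ₁))
    (f := ρ₂) (g := e ≫ ρ₁)
  have := strongEpi_lift_of_isPullback_right (.of_hasPullback ρ₂ (e ≫ ρ₁))
  exact exists_lift_of_strongEpi_of_mono_prodLift
    (c ≫ (pullback.lift (pullback.fst _ _ ≫ e) (pullback.snd _ _)
        (by simpa using pullback.condition) : _ ⟶ pullback ρ₂ (e ≫ ρ₁)) ≫
      (pullback.lift (pullback.fst _ _) (pullback.snd _ _ ≫ e)
        (by simpa using pullback.condition) : _ ⟶ pullback ρ₂ ρ₁))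
    (t ≫ e) _ _ (by simpa using ht₁) (by simpa using ht₂)

end Regular

section Coproducts

variable [HasBinaryCoproducts C] (hb : CoprodOfPullbacksIsPullback C)
include hb

theorem mono_coprodMap {X₁ Y₁ X₂ Y₂ : C} (f₁ : X₁ ⟶ Y₁) (f₂ : X₂ ⟶ Y₂) [Mono f₁] [Mono f₂] :
    Mono (coprod.map f₁ f₂) :=
  IsKernelPair.mono_of_isIso_fst (a := coprod.map (𝟙 X₁) (𝟙 X₂)) (b := coprod.map (𝟙 X₁) (𝟙 X₂))
    (hb _ _ _ _ _ _ _ _ (IsKernelPair.id_of_mono f₁) (IsKernelPair.id_of_mono f₂))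

theorem isPullback_inr_coprodMap_id [HasInitial C] {X Y Z : C} (f : Y ⟶ Z) :
    IsPullback (coprod.inr : Y ⟶ X ⨿ Y) f (coprod.map (𝟙 X) f) coprod.inr := by
  have h := hb _ _ _ _ _ _ _ _ (.of_vert_isIso ⟨by simp⟩ :
      IsPullback (initial.to X) (𝟙 (⊥_ C)) (𝟙 X) (initial.to X))
    (.of_horiz_isIso ⟨by simp⟩ : IsPullback (𝟙 Y) f f (𝟙 Z))
  exact h.of_iso (coprod.leftUnitor Y) (Iso.refl _) (coprod.leftUnitor Z) (Iso.refl _)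
    (by cat_disch) (by cat_disch) (by simp) (by cat_disch)

-- The summand `⊥ ×_{Y₂} X₂` cannot be dropped: the initial object need not be strict.
theorem isPullback_inl_coprodMap [HasInitial C] {X₁ Y₁ X₂ Y₂ : C} (f₁ : X₁ ⟶ Y₁) (f₂ : X₂ ⟶ Y₂)
    [HasPullback (initial.to Y₂) f₂] :
    IsPullback (coprod.desc f₁ (pullback.fst (initial.to Y₂) f₂ ≫ initial.to Y₁))
      (coprod.map (𝟙 X₁) (pullback.snd (initial.to Y₂) f₂)) coprod.inl (coprod.map f₁ f₂) := by
  have h := hb _ _ _ _ _ _ _ _ (.of_vert_isIso ⟨by simp⟩ : IsPullback f₁ (𝟙 X₁) (𝟙 Y₁) f₁)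
    (.of_hasPullback (initial.to Y₂) f₂)
  exact h.of_iso (Iso.refl _) (coprod.rightUnitor Y₁) (Iso.refl _) (Iso.refl _)
    (by cat_disch) (by simp) (by cat_disch) (by simp)

theorem exists_isRegularEpi_coprodCover [Regular C] (hd : RegEpiSquaresAreFeeblePullbacks C)
    {X₁ X₂ E B P₁ P₂ P : C} {f₁ : X₁ ⟶ B} {f₂ : X₂ ⟶ B} {g : E ⟶ B} [IsRegularEpi g]
    {a₁ : P₁ ⟶ X₁} {b₁ : P₁ ⟶ E} {a₂ : P₂ ⟶ X₂} {b₂ : P₂ ⟶ E}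
    (sq₁ : IsPullback a₁ b₁ f₁ g) (sq₂ : IsPullback a₂ b₂ f₂ g)
    {fst : P ⟶ X₁ ⨿ X₂} {snd : P ⟶ E} (sq : IsPullback fst snd (coprod.desc f₁ f₂) g) :
    ∃ c : P₁ ⨿ P₂ ⟶ P, IsRegularEpi c ∧ c ≫ fst = coprod.map a₁ a₂ ∧
      c ≫ snd = coprod.desc b₁ b₂ := by
  obtain ⟨hk, ⟨k⟩⟩ := hd g (IsRegularEpi.regularEpi (f := g)).some
  let c := sq.lift (coprod.map a₁ a₂) (coprod.desc b₁ b₂) (by ext <;> simp [sq₁.w, sq₂.w])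
  -- `c` is the base change of the comparison map `k` of Condition (d) along the pullback of
  -- `g` and `[f₁, f₂] = (f₁ ⨿ f₂) ≫ codiag B`.
  have hbot : IsPullback (pullback.lift snd (fst ≫ coprod.map f₁ f₂) (by simp [sq.w]))
      fst (pullback.snd g (codiag B)) (coprod.map f₁ f₂) :=
    .of_right (by simpa using sq.flip) (by simp) (.of_hasPullback g (codiag B))
  have htop : IsPullback (coprod.map b₁ b₂) c
      (pullback.lift (codiag E) (coprod.map g g) hk) _ :=
    .of_bot (by simpa [c] using (hb _ _ _ _ _ _ _ _ sq₁ sq₂).flip)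
      (by ext <;> simp [c, reassoc_of% sq₁.w, reassoc_of% sq₂.w]) hbot
  exact ⟨c, Regular.regularEpiIsStableUnderBaseChange.of_isPullback htop ⟨⟨k⟩⟩,
    sq.lift_fst _ _ _, sq.lift_snd _ _ _⟩

end Coproducts

namespace MonoPushout

variable [HasBinaryCoproducts C] {S A : C} (m : S ⟶ A)

/-! In `Set`, the first summand of `(A ⨿ S) ⨿ (A ⨿ S)` relates `inl (fold x)` to `incl x`
and the second summand the swapped pair; the image of `(relFst m, relSnd m)` is the
equivalence relation on `A ⨿ A` generated by `inl (m s) ~ inr (m s)`. -/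

noncomputable def fold : A ⨿ S ⟶ A := coprod.desc (𝟙 A) m

noncomputable def incl : A ⨿ S ⟶ A ⨿ A := coprod.map (𝟙 A) m

noncomputable def relFst : (A ⨿ S) ⨿ (A ⨿ S) ⟶ A ⨿ A := coprod.map (fold m) (fold m)

noncomputable def relSnd : (A ⨿ S) ⨿ (A ⨿ S) ⟶ A ⨿ A :=
  coprod.desc (incl m) (incl m ≫ (coprod.braiding A A).hom)

theorem relFst_section : coprod.map coprod.inl coprod.inl ≫ relFst m = 𝟙 (A ⨿ A) := by
  ext <;> simp [relFst, fold]

theorem relSnd_section : coprod.map coprod.inl coprod.inl ≫ relSnd m = 𝟙 (A ⨿ A) := by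
  ext <;> simp [relSnd, incl, coprod.braiding]

noncomputable def relSwap : (A ⨿ S) ⨿ (A ⨿ S) ⟶ (A ⨿ S) ⨿ (A ⨿ S) :=
  coprod.desc (coprod.desc (coprod.inl ≫ coprod.inl) (coprod.inr ≫ coprod.inr))
    (coprod.desc (coprod.inl ≫ coprod.inr) (coprod.inr ≫ coprod.inl))

theorem relSwap_relFst : relSwap ≫ relFst m = relSnd m := by
  ext <;> simp [relSwap, relFst, relSnd, fold, incl, coprod.braiding]

theorem relSwap_relSnd : relSwap ≫ relSnd m = relFst m := by
  ext <;> simp [relSwap, relFst, relSnd, fold, incl, coprod.braiding]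

variable [Mono m]

theorem isPullback_incl_relFst (hb : CoprodOfPullbacksIsPullback C)
    (hc : MonoSquaresArePullbacks C) :
    IsPullback (coprod.map (fold m) (codiag S)) (coprod.map (𝟙 (A ⨿ S)) (coprod.map m (𝟙 S)))
      (incl m) (relFst m) :=
  hb _ _ _ _ _ _ _ _ (.of_vert_isIso ⟨by simp⟩ : IsPullback (fold m) (𝟙 _) (𝟙 A) (fold m))
    (hc m ‹_›)

theorem exists_trans [Regular C] (hb : CoprodOfPullbacksIsPullback C)
    (hc : MonoSquaresArePullbacks C) (hd : RegEpiSquaresAreFeeblePullbacks C) {I : C}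
    (e : (A ⨿ S) ⨿ (A ⨿ S) ⟶ I) [IsRegularEpi e] {ρ₁ ρ₂ : I ⟶ A ⨿ A} [Mono (prod.lift ρ₁ ρ₂)]
    (he₁ : e ≫ ρ₁ = relFst m) (he₂ : e ≫ ρ₂ = relSnd m) :
    ∃ t : pullback ρ₂ ρ₁ ⟶ I,
      t ≫ ρ₁ = pullback.fst ρ₂ ρ₁ ≫ ρ₁ ∧ t ≫ ρ₂ = pullback.snd ρ₂ ρ₁ ≫ ρ₂ := by
  have : IsSplitEpi (relFst m) := ⟨⟨⟨_, relFst_section m⟩⟩⟩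
  have sq₁ := isPullback_incl_relFst m hb hc
  have sq₂ : IsPullback (coprod.map (fold m) (codiag S))
      (coprod.map (𝟙 (A ⨿ S)) (coprod.map m (𝟙 S)) ≫ (coprod.braiding _ _).hom)
      (incl m ≫ (coprod.braiding A A).hom) (relFst m) :=
    sq₁.of_iso (Iso.refl _) (Iso.refl _) (coprod.braiding _ _) (coprod.braiding A A)
      (by simp) (by simp) (by simp) (by ext <;> simp [relFst, coprod.braiding])
  obtain ⟨c, _, hc₁, hc₂⟩ :=
    exists_isRegularEpi_coprodCover hb hd sq₁ sq₂ (.of_hasPullback (relSnd m) (relFst m))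
  -- On each summand of the cover, a composable pair of related elements is sent to an element
  -- of `(A ⨿ S) ⨿ (A ⨿ S)` relating its two outer ends.
  refine exists_trans_of_cover e he₁ he₂ c
    (coprod.desc
      (coprod.desc coprod.inl
        (coprod.desc (coprod.inr ≫ coprod.inl) (m ≫ coprod.inl ≫ coprod.inl)))
      (coprod.desc coprod.inr
        (coprod.desc (coprod.inr ≫ coprod.inr) (m ≫ coprod.inl ≫ coprod.inr)))) ?_ ?_
  · rw [reassoc_of% hc₁]
    ext <;> simp [relFst, fold]
  · rw [reassoc_of% hc₂]
    ext <;> simp [relSnd, incl, coprod.braiding]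

-- This handles the summand `⊥ ×_A (A ⨿ S)` of the fibre of `relFst m` over `inl`, which
-- need not be initial.
theorem exists_incl_braiding_of_fold_eq [HasInitial C] (hc : MonoSquaresArePullbacks C)
    {T : C} (k : T ⟶ A ⨿ S) (t : T ⟶ ⊥_ C) (hk : k ≫ fold m = t ≫ initial.to A) :
    ∃ π : T ⟶ A ⨿ S, π ≫ fold m = k ≫ fold m ∧
      π ≫ incl m = k ≫ incl m ≫ (coprod.braiding A A).hom := by
  have hq : IsPullback (codiag S) (coprod.map m (𝟙 S)) m (fold m) := hc m ‹_›
  have hψ : (t ≫ initial.to S) ≫ m = k ≫ fold m := by simp [hk]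
  have h₁ : coprod.desc coprod.inr (m ≫ coprod.inl) ≫ fold m = codiag S ≫ m := by
    ext <;> simp [fold]
  have h₂ : coprod.desc coprod.inr (m ≫ coprod.inl) ≫ incl m =
      coprod.map m (𝟙 S) ≫ incl m ≫ (coprod.braiding A A).hom := by
    ext <;> simp [incl, coprod.braiding]
  refine ⟨hq.lift _ _ hψ ≫ coprod.desc coprod.inr (m ≫ coprod.inl), ?_, ?_⟩
  · rw [Category.assoc, h₁, reassoc_of% hq.lift_fst, hψ]
  · rw [Category.assoc, h₂, reassoc_of% hq.lift_snd]

theorem isPullback_fold_inl [Regular C] [HasInitial C] (hb : CoprodOfPullbacksIsPullback C)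
    (hc : MonoSquaresArePullbacks C) {I : C} (e : (A ⨿ S) ⨿ (A ⨿ S) ⟶ I)
    [IsRegularEpi e] {ρ₁ ρ₂ : I ⟶ A ⨿ A} [Mono (prod.lift ρ₁ ρ₂)]
    (he₁ : e ≫ ρ₁ = relFst m) (he₂ : e ≫ ρ₂ = relSnd m) :
    IsPullback (fold m) (coprod.inl ≫ e) coprod.inl ρ₁ := by
  have hw : fold m ≫ coprod.inl = (coprod.inl ≫ e) ≫ ρ₁ := by simp [he₁, relFst]
  have : Mono (incl m) := mono_coprodMap hb _ _
  have : Mono (coprod.inl ≫ e) :=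
    mono_of_mono_fac (show (coprod.inl ≫ e) ≫ ρ₂ = incl m by simp [he₂, relSnd])
  have : Mono (pullback.lift _ _ hw) := mono_of_mono_fac (pullback.lift_snd _ _ hw)
  have hY := isPullback_inl_coprodMap hb (fold m) (fold m)
  rw [← relFst, ← he₁] at hY
  have := strongEpi_lift_of_isPullback_right hY
  obtain ⟨π, hπ₁, hπ₂⟩ := exists_incl_braiding_of_fold_eq m hc
    (pullback.snd (initial.to A) (fold m)) (pullback.fst _ _) pullback.condition.symm
  refine isPullback_of_strongEpi_fac hw
    (pullback.lift (coprod.desc (fold m) (pullback.fst _ (fold m) ≫ initial.to A))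
      (coprod.map (𝟙 _) (pullback.snd (initial.to A) (fold m)) ≫ e) _)
    (coprod.desc (𝟙 _) π) ?_
  apply pullback.hom_ext
  · ext <;> simp [hπ₁, pullback.condition]
  · apply hom_ext_of_mono_prodLift (ρ₁ := ρ₁) (ρ₂ := ρ₂)
    · ext <;> simp [he₁, relFst, reassoc_of% hπ₁, ← pullback.condition_assoc]
    · ext <;> simp [he₂, relSnd, hπ₂]

theorem exists_isPullback_inl_inr [Regular C] [HasInitial C] (hexact : EquivRelsEffective C)
    (hb : CoprodOfPullbacksIsPullback C) (hc : MonoSquaresArePullbacks C)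
    (hd : RegEpiSquaresAreFeeblePullbacks C) :
    ∃ (Q : C) (p : A ⨿ A ⟶ Q), IsPullback m m (coprod.inl ≫ p) (coprod.inr ≫ p) := by
  let F := Regular.strongEpiMonoFactorisation (prod.lift (relFst m) (relSnd m))
  have hρ : prod.lift (F.m ≫ prod.fst) (F.m ≫ prod.snd) = F.m := by ext <;> simp
  have : Mono (prod.lift (F.m ≫ prod.fst) (F.m ≫ prod.snd)) := by rw [hρ]; infer_instance
  have he₁ : F.e ≫ F.m ≫ prod.fst = relFst m := by simp [F.fac_assoc]
  have he₂ : F.e ≫ F.m ≫ prod.snd = relSnd m := by simp [F.fac_assoc]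
  obtain ⟨Q, p, hp⟩ := hexact _ _ this
    ⟨coprod.map coprod.inl coprod.inl ≫ F.e, by simp [he₁, relFst_section],
      by simp [he₂, relSnd_section]⟩
    (exists_symm_of_swap F.e he₁ he₂ relSwap (relSwap_relFst m) (relSwap_relSnd m))
    (exists_trans m hb hc hd F.e he₁ he₂)
  refine ⟨Q, p, ?_⟩
  have hv := (isPullback_fold_inl m hb hc F.e he₁ he₂).paste_vert hp
  rw [show (coprod.inl ≫ F.e) ≫ F.m ≫ prod.snd = incl m by simp [he₂, relSnd]] at hv
  simpa [fold] using (isPullback_inr_coprodMap_id hb m).paste_horiz hv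

end MonoPushout

end

/-- Let `C` be an exact category satisfying Condition (*). Then every monomorphism in
`C` is a regular monomorphism and `C` is balanced. -/
theorem mono_regular_and_balanced {C : Type*} [Category C]
    [HasFiniteLimits C] (hcoeq : HasKernelPairCoequalizers C)
    (hstab : RegularEpisPullbackStable C) (hexact : EquivRelsEffective C)
    [HasFiniteCoproducts C]
    (hb : CoprodOfPullbacksIsPullback C) (hc : MonoSquaresArePullbacks C)
    (hd : RegEpiSquaresAreFeeblePullbacks C) :
    (∀ {X Y : C} (m : X ⟶ Y), Mono m → Nonempty (RegularMono m)) ∧ Balanced C := by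
  have := regular_of_hasKernelPairCoequalizers hcoeq hstab
  have regularMono : ∀ {X Y : C} (m : X ⟶ Y), Mono m → Nonempty (RegularMono m) := fun m _ =>
    have ⟨_, _, h⟩ := MonoPushout.exists_isPullback_inl_inr m hexact hb hc hd
    ⟨regularMonoOfIsPullback h⟩
  have : IsRegularMonoCategory C := ⟨fun m hm => ⟨regularMono m hm⟩⟩
  exact ⟨regularMono, inferInstance⟩
end
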